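/- Let n ≥ 1, let T ∈ ℝ^{n×n} be the tridiagonal Toeplitz matrix with 2 on the diagonal and −1 on the first sub- and superdiagonals, and let U ∈ ℝ^{n×2} have columns √2·e₁ and √2·e_n. Then the matrix M = (I + T⁻¹U (T⁻¹U)ᵗ)⁻¹ exists and its entries are given explicitly by: m_{i,j} = q₀(n) + q₁(n)(i + j) + q₂(n)·i·j for i ≠ j, and m_{i,i} = 1 + q₀(n) + 2q₁(n)·i + q₂(n)·i² for all i, where q₀(n) = −(4n² + 8n + 6)/((n+1)(n² + 2n + 3)), q₁(n) = 6/(n² + 2n + 3), and q₂(n) = −12/((n+1)(n² + 2n + 3)). -/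

import Mathlib

open scoped ENNReal
open Matrix

/-- The `n × n` tridiagonal Toeplitz matrix `tridiag(-1, 2, -1)`. -/
def Tmat (n : ℕ) : Matrix (Fin n) (Fin n) ℝ :=
  Matrix.of fun i j =>
    if (i : ℕ) = (j : ℕ) then 2
    else if (j : ℕ) = (i : ℕ) + 1 ∨ (i : ℕ) = (j : ℕ) + 1 then -1
    else 0

/-- The `n × 2` matrix whose columns are `√2·e₁` and `√2·eₙ`. -/
noncomputable def Umat (n : ℕ) : Matrix (Fin n) (Fin 2) ℝ :=
  Matrix.of fun i k =>
    if k = 0 then (if (i : ℕ) = 0 then Real.sqrt 2 else 0)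
    else (if (i : ℕ) = n - 1 then Real.sqrt 2 else 0)

/-!
With 0-based indices, `T⁻¹` is the discrete Green's function
`G(i,j) = (min i j + 1)(n - max i j)/(n+1)`: extended to all integers it vanishes at the boundary
points `i = -1` and `i = n`, and its second difference in `i` is `δᵢⱼ`. Reading off the first and
last columns of `G` gives `T⁻¹U = W K`, where `W` has rows `(1, i+1)` and `K` is `2 × 2`. So
`I + T⁻¹U(T⁻¹U)ᵀ = I + W A Wᵀ` with `A = K Kᵀ`, the claimed inverse is `I + W B Wᵀ` with
`B = [[q₀, q₁], [q₁, q₂]]`, and their product is `I + W (A + B + A (WᵀW) B) Wᵀ`. Everything thus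
reduces to a `2 × 2` identity in which the Gram matrix `WᵀW` contributes `∑ 1`, `∑ (i+1)` and
`∑ (i+1)²`.
-/

theorem Matrix.one_add_mul_mul_mul_one_add_mul_mul_eq_one {m k R : Type*} [Fintype m]
    [DecidableEq m] [Fintype k] [CommRing R] (X : Matrix m k R) (Y : Matrix k m R)
    (A B : Matrix k k R)
    (h : A + B + A * (Y * X) * B = 0) :
    (1 + X * A * Y) * (1 + X * B * Y) = 1 := by
  have hXY : X * (A + B + A * (Y * X) * B) * Y = 0 := by rw [h, Matrix.mul_zero, Matrix.zero_mul]
  simp only [Matrix.mul_add, Matrix.add_mul, Matrix.mul_assoc, Matrix.mul_one, Matrix.one_mul]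
    at hXY ⊢
  rw [← sub_eq_zero, ← hXY]
  abel

noncomputable def greenFun (n : ℕ) (i j : ℤ) : ℝ :=
  ((min i j + 1) * (n - max i j) : ℤ) / (n + 1)

theorem greenFun_neg_one_left (n : ℕ) {j : ℤ} (hj : -1 ≤ j) : greenFun n (-1) j = 0 := by
  simp [greenFun, min_eq_left hj]

theorem greenFun_natCast_left (n : ℕ) {j : ℤ} (hj : j ≤ n) : greenFun n n j = 0 := by
  simp [greenFun, max_eq_left hj]

theorem greenFun_second_diff (n : ℕ) (i j : ℤ) :
    2 * greenFun n i j - greenFun n (i - 1) j - greenFun n (i + 1) j = if i = j then 1 else 0 := by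
  have hnum : 2 * ((min i j + 1) * (n - max i j)) - (min (i - 1) j + 1) * (n - max (i - 1) j)
      - (min (i + 1) j + 1) * (n - max (i + 1) j) = if i = j then (n + 1 : ℤ) else 0 := by
    rcases lt_trichotomy i j with h | rfl | h
    · rw [if_neg h.ne, min_eq_left h.le, max_eq_right h.le, min_eq_left (by omega),
        max_eq_right (by omega), min_eq_left (by omega), max_eq_right (by omega)]
      ring
    · rw [if_pos rfl, min_self, max_self, min_eq_left (by omega), max_eq_right (by omega),
        min_eq_right (by omega), max_eq_left (by omega)]
      ring
    · rw [if_neg h.ne', min_eq_right h.le, max_eq_left h.le, min_eq_right (by omega),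
        max_eq_left (by omega), min_eq_right (by omega), max_eq_left (by omega)]
      ring
  have hn : (n + 1 : ℝ) ≠ 0 := by positivity
  rw [show (if i = j then (1 : ℝ) else 0) = ((if i = j then (n + 1 : ℤ) else 0 : ℤ) : ℝ) / (n + 1)
    by split_ifs <;> simp [hn], ← hnum]
  unfold greenFun
  push_cast
  ring

theorem Tmat_mulVec_apply {n : ℕ} (g : ℤ → ℝ) (h₀ : g (-1) = 0) (hn : g n = 0) (i : Fin n) :
    (Tmat n *ᵥ fun k => g (k : ℕ)) i = 2 * g i - g (i - 1) - g (i + 1) := by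
  obtain ⟨a, ha⟩ := i
  simp only [mulVec, dotProduct, Tmat, of_apply]
  rw [Fin.sum_univ_eq_sum_range (fun m => (if a = m then (2 : ℝ)
    else if m = a + 1 ∨ a = m + 1 then -1 else 0) * g m) n]
  have hsplit : ∀ m : ℕ, (if a = m then (2 : ℝ) else if m = a + 1 ∨ a = m + 1 then -1 else 0) * g m
      = (if m = a then 2 * g a else 0) - (if m + 1 = a then g (a - 1) else 0)
        - (if m = a + 1 then g (a + 1) else 0) := by
    intro m
    split_ifs <;> first | omega | (subst_vars; push_cast; ring_nf)
  simp only [hsplit, Finset.sum_sub_distrib, Finset.sum_ite_eq', Finset.mem_range, if_pos ha]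
  congr 1
  · congr 1
    rcases a with _ | b
    · simp [h₀]
    · simp [Finset.sum_ite_eq', show b < n by omega]
  · split_ifs with h
    · rfl
    · rw [show (a : ℤ) + 1 = n by omega, hn]

noncomputable def greenMatrix (n : ℕ) : Matrix (Fin n) (Fin n) ℝ :=
  of fun i j => greenFun n (i : ℕ) (j : ℕ)

theorem Tmat_mul_greenMatrix (n : ℕ) : Tmat n * greenMatrix n = 1 := by
  ext i j
  have hj := j.isLt
  change (Tmat n *ᵥ fun k : Fin n => greenFun n (k : ℕ) (j : ℕ)) i = _
  rw [Tmat_mulVec_apply (fun k => greenFun n k j) (greenFun_neg_one_left n (by omega))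
    (greenFun_natCast_left n (by omega)), greenFun_second_diff, one_apply]
  simp [Fin.ext_iff]

def Wmat (n : ℕ) : Matrix (Fin n) (Fin 2) ℝ :=
  of fun i => ![1, ((i : ℕ) : ℝ) + 1]

noncomputable def Kmat (n : ℕ) : Matrix (Fin 2) (Fin 2) ℝ :=
  !![√2, 0; -(√2 / (n + 1)), √2 / (n + 1)]

noncomputable def coeffMat (n : ℕ) : Matrix (Fin 2) (Fin 2) ℝ :=
  !![-(4 * (n : ℝ) ^ 2 + 8 * n + 6) / (((n : ℝ) + 1) * ((n : ℝ) ^ 2 + 2 * n + 3)),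
      6 / ((n : ℝ) ^ 2 + 2 * n + 3);
    6 / ((n : ℝ) ^ 2 + 2 * n + 3),
      -12 / (((n : ℝ) + 1) * ((n : ℝ) ^ 2 + 2 * n + 3))]

theorem greenMatrix_mul_Umat (n : ℕ) : greenMatrix n * Umat n = Wmat n * Kmat n := by
  ext i k
  have hn : 0 < n := i.pos
  have hn' : (n + 1 : ℝ) ≠ 0 := by positivity
  rw [mul_apply, Finset.sum_eq_single (if k = 0 then ⟨0, hn⟩ else ⟨n - 1, by omega⟩)]
  · fin_cases k <;> simp [greenMatrix, greenFun, Umat, Wmat, Kmat, mul_apply, Fin.sum_univ_two]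
    · field_simp
      ring
    · have hi := i.isLt
      have h1 : ((i : ℕ) : ℝ) ≤ ((n - 1 : ℕ) : ℝ) := by
        exact_mod_cast (by omega : (i : ℕ) ≤ n - 1)
      rw [min_eq_left h1, max_eq_right h1, Nat.cast_sub hn]
      push_cast
      field_simp
      ring
  · intro b _ hb
    have hb' : (b : ℕ) ≠ if k = 0 then 0 else n - 1 := by
      split_ifs at hb ⊢ <;> exact fun h => hb (Fin.ext h)
    fin_cases k <;> simp_all [Umat]
  · simp

theorem sum_fin_cast_add_one (n : ℕ) :
    ∑ i : Fin n, (((i : ℕ) : ℝ) + 1) = (n : ℝ) * (n + 1) / 2 := by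
  rw [Fin.sum_univ_eq_sum_range (fun i : ℕ => (i : ℝ) + 1)]
  induction n with
  | zero => simp
  | succ n ih => rw [Finset.sum_range_succ, ih]; push_cast; ring

theorem sum_fin_cast_add_one_sq (n : ℕ) :
    ∑ i : Fin n, (((i : ℕ) : ℝ) + 1) ^ 2 = (n : ℝ) * (n + 1) * (2 * n + 1) / 6 := by
  rw [Fin.sum_univ_eq_sum_range (fun i : ℕ => ((i : ℝ) + 1) ^ 2)]
  induction n with
  | zero => simp
  | succ n ih => rw [Finset.sum_range_succ, ih]; push_cast; ring

theorem Wmat_transpose_mul_self (n : ℕ) :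
    (Wmat n)ᵀ * Wmat n =
      !![(n : ℝ), n * (n + 1) / 2; n * (n + 1) / 2, n * (n + 1) * (2 * n + 1) / 6] := by
  ext a b
  fin_cases a <;> fin_cases b <;>
    simp [mul_apply, Wmat, ← sq, sum_fin_cast_add_one, sum_fin_cast_add_one_sq]

theorem Kmat_mul_transpose (n : ℕ) :
    Kmat n * (Kmat n)ᵀ =
      !![2, -(2 / ((n : ℝ) + 1)); -(2 / ((n : ℝ) + 1)), 4 / ((n : ℝ) + 1) ^ 2] := by
  have hs : √2 ^ 2 = 2 := Real.sq_sqrt (by norm_num)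
  ext a b
  fin_cases a <;> fin_cases b <;> simp [Kmat, mul_apply, Fin.sum_univ_two, ← sq] <;> field_simp <;>
    linarith [hs]

/-- `coeffMat n = -((K Kᵀ)⁻¹ + WᵀW)⁻¹`, the solution `B` of this equation. -/
theorem coeffMat_spec (n : ℕ) :
    Kmat n * (Kmat n)ᵀ + coeffMat n + Kmat n * (Kmat n)ᵀ * ((Wmat n)ᵀ * Wmat n) * coeffMat n =
      0 := by
  have hn : (n + 1 : ℝ) ≠ 0 := by positivity
  have hd : ((n : ℝ) ^ 2 + 2 * n + 3) ≠ 0 := by positivity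
  rw [Wmat_transpose_mul_self, Kmat_mul_transpose, coeffMat, mul_fin_two, mul_fin_two]
  ext a b
  fin_cases a <;> fin_cases b <;> simp <;> field_simp <;> ring

theorem M_entries_explicit_general (n : ℕ) :
    IsUnit ((1 : Matrix (Fin n) (Fin n) ℝ) + (Tmat n)⁻¹ * Umat n * ((Tmat n)⁻¹ * Umat n)ᵀ) ∧
    ∀ i j : Fin n,
      ((1 : Matrix (Fin n) (Fin n) ℝ) + (Tmat n)⁻¹ * Umat n * ((Tmat n)⁻¹ * Umat n)ᵀ)⁻¹ i j =
        (let x : ℝ := (i : ℕ) + 1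
         let y : ℝ := (j : ℕ) + 1
         let q0 : ℝ := -(4 * (n : ℝ) ^ 2 + 8 * n + 6) / (((n : ℝ) + 1) * ((n : ℝ) ^ 2 + 2 * n + 3))
         let q1 : ℝ := 6 / ((n : ℝ) ^ 2 + 2 * n + 3)
         let q2 : ℝ := -12 / (((n : ℝ) + 1) * ((n : ℝ) ^ 2 + 2 * n + 3))
         if i = j then 1 + q0 + 2 * q1 * x + q2 * x ^ 2
         else q0 + q1 * (x + y) + q2 * x * y) := by
  have hV : (Tmat n)⁻¹ * Umat n = Wmat n * Kmat n := by
    rw [inv_eq_right_inv (Tmat_mul_greenMatrix n), greenMatrix_mul_Umat]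
  have hM : (1 : Matrix (Fin n) (Fin n) ℝ) + (Tmat n)⁻¹ * Umat n * ((Tmat n)⁻¹ * Umat n)ᵀ
      = 1 + Wmat n * (Kmat n * (Kmat n)ᵀ) * (Wmat n)ᵀ := by
    rw [hV, transpose_mul]
    simp only [Matrix.mul_assoc]
  have hinv := one_add_mul_mul_mul_one_add_mul_mul_eq_one (Wmat n) (Wmat n)ᵀ _ _ (coeffMat_spec n)
  rw [hM]
  refine ⟨IsUnit.of_mul_eq_one _ hinv, fun i j => ?_⟩
  rw [inv_eq_right_inv hinv]
  simp only [Wmat, coeffMat, Matrix.add_apply, one_apply, mul_apply, of_apply, cons_val',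
    cons_val_fin_one, Fin.sum_univ_two, cons_val_zero, cons_val_one, transpose_apply, one_mul,
    mul_one]
  split_ifs with h
  · subst h
    ring
  · ring

/-- Explicit entries of `M = (I + T⁻¹U (T⁻¹U)ᵗ)⁻¹`: with
`q₀ = -(4n²+8n+6)/((n+1)(n²+2n+3))`, `q₁ = 6/(n²+2n+3)`,
`q₂ = -12/((n+1)(n²+2n+3))` (1-based indices `i' = i+1`, `j' = j+1`),
`m_{i,j} = q₀ + q₁(i'+j') + q₂ i' j'` off the diagonal and
`m_{i,i} = 1 + q₀ + 2 q₁ i' + q₂ i'²` on the diagonal. -/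
theorem M_entries_explicit (n : ℕ) (hn : 1 ≤ n) :
    IsUnit ((1 : Matrix (Fin n) (Fin n) ℝ) + (Tmat n)⁻¹ * Umat n * ((Tmat n)⁻¹ * Umat n)ᵀ) ∧
    ∀ i j : Fin n,
      ((1 : Matrix (Fin n) (Fin n) ℝ) + (Tmat n)⁻¹ * Umat n * ((Tmat n)⁻¹ * Umat n)ᵀ)⁻¹ i j =
        (let x : ℝ := (i : ℕ) + 1
         let y : ℝ := (j : ℕ) + 1
         let q0 : ℝ := -(4 * (n : ℝ) ^ 2 + 8 * n + 6) / (((n : ℝ) + 1) * ((n : ℝ) ^ 2 + 2 * n + 3))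
         let q1 : ℝ := 6 / ((n : ℝ) ^ 2 + 2 * n + 3)
         let q2 : ℝ := -12 / (((n : ℝ) + 1) * ((n : ℝ) ^ 2 + 2 * n + 3))
         if i = j then 1 + q0 + 2 * q1 * x + q2 * x ^ 2
         else q0 + q1 * (x + y) + q2 * x * y) :=
  M_entries_explicit_general n
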